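/- Let U = [[A, B], [C, D]] be a block unitary matrix on ℂ^m ⊕ ℂ^n and let Ψ(z) = A + zB(I − zD)^{-1}C. If |z| = 1, I − zD is invertible, and w is an eigenvalue of Ψ(z), then |w| = 1. -/

import Mathlib

open Matrix

/-! If `(1 - z D) y = C v`, the unitary `U = [[A, B], [C, D]]` maps `(v, z y)` to
`(Ψ(z) v, y)`. Comparing squared norms, and using `|z| = 1` to cancel `‖z y‖² = ‖y‖²`,
gives `‖Ψ(z) v‖ = ‖v‖`. -/

section

variable {ι α : Type*} [Fintype ι]

theorem Matrix.star_mulVec_dotProduct_mulVec_of_mem_unitaryGroup [DecidableEq ι] [CommRing α]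
    [StarRing α] {U : Matrix ι ι α} (hU : U ∈ unitaryGroup ι α) (x : ι → α) :
    star (U *ᵥ x) ⬝ᵥ (U *ᵥ x) = star x ⬝ᵥ x := by
  rw [star_mulVec, dotProduct_mulVec, vecMul_vecMul, ← star_eq_conjTranspose,
    mem_unitaryGroup_iff'.mp hU, vecMul_one]

theorem star_smul_dotProduct_smul [CommSemiring α] [StarRing α] (c : α) (x : ι → α) :
    star (c • x) ⬝ᵥ (c • x) = (star c * c) * (star x ⬝ᵥ x) := by
  rw [star_smul, smul_dotProduct, dotProduct_smul, smul_eq_mul, smul_eq_mul]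
  ring

end

section

variable {ι κ α : Type*} [Fintype ι] [Fintype κ] [CommRing α]

theorem fromBlocks_mulVec_sumElim_smul (A : Matrix ι ι α) (B : Matrix ι κ α)
    (C : Matrix κ ι α) (D : Matrix κ κ α) {z : α} {v : ι → α} {y : κ → α} [DecidableEq κ]
    (hy : (1 - z • D) *ᵥ y = C *ᵥ v) :
    fromBlocks A B C D *ᵥ Sum.elim v (z • y) = Sum.elim (A *ᵥ v + z • B *ᵥ y) y := by
  rw [sub_mulVec, one_mulVec, smul_mulVec] at hy
  rw [fromBlocks_mulVec, Sum.elim_comp_inl, Sum.elim_comp_inr, ← hy, mulVec_smul, mulVec_smul]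
  congr 1
  abel

variable [DecidableEq κ]

noncomputable def transferFunction (A : Matrix ι ι α) (B : Matrix ι κ α) (C : Matrix κ ι α)
    (D : Matrix κ κ α) (z : α) : Matrix ι ι α :=
  A + z • (B * (1 - z • D)⁻¹ * C)

theorem star_mulVec_dotProduct_mulVec_transferFunction [DecidableEq ι] [StarRing α]
    {A : Matrix ι ι α} {B : Matrix ι κ α} {C : Matrix κ ι α} {D : Matrix κ κ α}
    (hU : fromBlocks A B C D ∈ unitaryGroup (ι ⊕ κ) α) {z : α} (hz : star z * z = 1)
    (hinv : IsUnit (1 - z • D)) (v : ι → α) :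
    star (transferFunction A B C D z *ᵥ v) ⬝ᵥ (transferFunction A B C D z *ᵥ v) =
      star v ⬝ᵥ v := by
  set y := (1 - z • D)⁻¹ *ᵥ C *ᵥ v
  have hy : (1 - z • D) *ᵥ y = C *ᵥ v := by
    rw [mulVec_mulVec, mul_nonsing_inv _ ((isUnit_iff_isUnit_det _).mp hinv), one_mulVec]
  have hΨ : transferFunction A B C D z *ᵥ v = A *ᵥ v + z • B *ᵥ y := by
    simp only [transferFunction, add_mulVec, smul_mulVec, ← mulVec_mulVec, y]
  have key := star_mulVec_dotProduct_mulVec_of_mem_unitaryGroup hU (Sum.elim v (z • y))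
  rw [fromBlocks_mulVec_sumElim_smul A B C D hy, ← hΨ, Function.star_sumElim,
    Function.star_sumElim, sumElim_dotProduct_sumElim, sumElim_dotProduct_sumElim,
    star_smul_dotProduct_smul, hz, one_mul] at key
  exact add_right_cancel key

end

open scoped ComplexOrder in
theorem norm_eq_one_of_mulVec_eq_smul {ι 𝕜 : Type*} [Fintype ι] [RCLike 𝕜]
    {M : Matrix ι ι 𝕜} {v : ι → 𝕜} {w : 𝕜} (hM : star (M *ᵥ v) ⬝ᵥ (M *ᵥ v) = star v ⬝ᵥ v)
    (hv : v ≠ 0) (hw : M *ᵥ v = w • v) : ‖w‖ = 1 := by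
  rw [hw, star_smul_dotProduct_smul] at hM
  have hw2 : (‖w‖ : 𝕜) ^ 2 = 1 :=
    (RCLike.conj_mul w).symm.trans <|
      (mul_eq_right₀ (dotProduct_star_self_eq_zero.not.mpr hv)).mp hM
  exact (pow_eq_one_iff_of_nonneg (norm_nonneg w) two_ne_zero).mp (by exact_mod_cast hw2)

theorem transfer_function_eigenvalues_unimodular (m n : ℕ)
    (A : Matrix (Fin m) (Fin m) ℂ) (B : Matrix (Fin m) (Fin n) ℂ)
    (C : Matrix (Fin n) (Fin m) ℂ) (D : Matrix (Fin n) (Fin n) ℂ)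
    (hU : Matrix.fromBlocks A B C D ∈ Matrix.unitaryGroup (Fin m ⊕ Fin n) ℂ)
    (z : ℂ) (hz : ‖z‖ = 1) (hinv : IsUnit ((1 : Matrix (Fin n) (Fin n) ℂ) - z • D))
    (w : ℂ) (v : Fin m → ℂ) (hv : v ≠ 0)
    (heig : (A + z • (B * (1 - z • D)⁻¹ * C)) *ᵥ v = w • v) :
    ‖w‖ = 1 := by
  have hz' : star z * z = 1 := by rw [RCLike.star_def, RCLike.conj_mul, hz]; norm_num
  exact norm_eq_one_of_mulVec_eq_smul
    (star_mulVec_dotProduct_mulVec_transferFunction hU hz' hinv v) hv heig
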